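/- arXiv:1605.01171 — 4 statements merged into one kernel-verified Lean document; each statement's English description precedes it below -/
import Mathlib

section
/- The orthogonal projection φ along h_n = (ε_1 + ⋯ + ε_n)/2, given by φ(v) = v − ((v, h_n)/‖h_n‖²)h_n, maps the vertex set {X_S : S ⊆ {1,…,n}} of the B_n Voronoi cell (the n-cube) onto the vertex set of the A_{n−1} Voronoi cell together with the origin; in particular φ(X_{{1,…,n}}) = φ(X_∅) = 0, and for 1 ≤ |S| = k ≤ n−1, φ(X_S) lies in the W(A_{n−1})-orbit of the fundamental weight h_k = (ε_1+⋯+ε_k) − (k/n)Σε_i. -/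
noncomputable section

/-- The Euclidean inner product on `ℝⁿ`. -/
def ip (n : ℕ) (u v : Fin n → ℝ) : ℝ := ∑ i, u i * v i

/-- The fundamental weight `h_n = (ε_1 + ⋯ + ε_n)/2` of `W(B_n)`. -/
def hwB (n : ℕ) : Fin n → ℝ := fun _ => 1 / 2

/-- The orthogonal projection along `h_n`: `φ(v) = v − ((v, h_n)/‖h_n‖²) h_n`. -/
def phi (n : ℕ) (v : Fin n → ℝ) : Fin n → ℝ :=
  v - (ip n v (hwB n) / ip n (hwB n) (hwB n)) • hwB n

/-- The vertex `X_S = (Σ_{i∈S} ε_i − Σ_{i∉S} ε_i)/2` of the `B_n` Voronoi cell. -/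
def XS (n : ℕ) (S : Finset (Fin n)) : Fin n → ℝ :=
  fun i => if i ∈ S then 1 / 2 else -(1 / 2)

/-- The fundamental weight `h_k = (ε_1 + ⋯ + ε_k) − (k/n)Σ_i ε_i` of `W(A_{n−1})`. -/
def hwA (n k : ℕ) : Fin n → ℝ :=
  fun i => (if (i : ℕ) < k then 1 else 0) - (k : ℝ) / (n : ℝ)

/-! Since `φ` subtracts the mean of the coordinates, `φ(X_S)` is the indicator of `S` minus
`|S|/n`; a permutation moving `S` onto `{1,…,|S|}` turns this into `h_{|S|}`. -/

open Finset

lemma ip_hwB_self (n : ℕ) : ip n (hwB n) (hwB n) = n / 4 := by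
  simp only [ip, hwB, sum_const, card_univ, Fintype.card_fin, nsmul_eq_mul]
  ring

lemma ip_XS_hwB (n : ℕ) (S : Finset (Fin n)) : ip n (XS n S) (hwB n) = (2 * #S - n) / 4 := by
  have hsummand : ∀ i, XS n S i * hwB n i = (if i ∈ S then 1 / 2 else 0) - 1 / 4 := by
    intro i
    simp only [XS, hwB]
    split_ifs <;> ring
  simp only [ip, hsummand, sum_sub_distrib, sum_ite_mem, univ_inter, sum_const, card_univ,
    Fintype.card_fin, nsmul_eq_mul]
  ring

lemma phi_XS_apply {n : ℕ} (S : Finset (Fin n)) (i : Fin n) :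
    phi n (XS n S) i = (if i ∈ S then 1 else 0) - #S / n := by
  have hn : (n : ℝ) ≠ 0 := Nat.cast_ne_zero.mpr i.pos.ne'
  simp only [phi, Pi.sub_apply, Pi.smul_apply, smul_eq_mul, ip_hwB_self, ip_XS_hwB, XS, hwB]
  split_ifs <;> field_simp <;> ring

lemma exists_perm_val_lt_card_iff_mem {n : ℕ} (S : Finset (Fin n)) :
    ∃ σ : Equiv.Perm (Fin n), ∀ i, (σ i : ℕ) < #S ↔ i ∈ S := by
  have hcard : #S = #{j : Fin n | (j : ℕ) < #S} := by
    rw [Fin.card_filter_val_lt, min_eq_right (card_le_univ S |>.trans_eq (Fintype.card_fin n))]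
  obtain ⟨σ, hσ⟩ := Equiv.Perm.exists_map_finset_eq S _ hcard
  refine ⟨σ, fun i => ?_⟩
  rw [← mem_map' σ.toEmbedding, hσ, mem_filter_univ]
  rfl

theorem stmt_9_general (n : ℕ) :
    phi n (XS n Finset.univ) = 0 ∧ phi n (XS n ∅) = 0 ∧
    ∀ S : Finset (Fin n), 1 ≤ S.card → S.card ≤ n - 1 →
      ∃ σ : Equiv.Perm (Fin n), phi n (XS n S) = fun i => hwA n S.card (σ i) := by
  refine ⟨funext fun i => ?_, funext fun i => ?_, fun S _ _ => ?_⟩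
  · have hn : (n : ℝ) ≠ 0 := Nat.cast_ne_zero.mpr i.pos.ne'
    simp [phi_XS_apply, hn]
  · simp [phi_XS_apply]
  · obtain ⟨σ, hσ⟩ := exists_perm_val_lt_card_iff_mem S
    refine ⟨σ, funext fun i => ?_⟩
    simp only [phi_XS_apply, hwA, hσ]

/-- The orthogonal projection `φ` along `h_n` maps the vertex set `{X_S}` of the `B_n`
Voronoi cell (the `n`-cube) onto the vertex set of the `A_{n−1}` Voronoi cell together
with the origin: `φ(X_{{1,…,n}}) = φ(X_∅) = 0`, and for `1 ≤ |S| ≤ n−1`, `φ(X_S)` lies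
in the `W(A_{n−1}) ≅ S_n`-orbit (permutations of coordinates) of `h_{|S|}`. -/
theorem stmt_9 (n : ℕ) (hn : 0 < n) :
    phi n (XS n Finset.univ) = 0 ∧ phi n (XS n ∅) = 0 ∧
    ∀ S : Finset (Fin n), 1 ≤ S.card → S.card ≤ n - 1 →
      ∃ σ : Equiv.Perm (Fin n), phi n (XS n S) = fun i => hwA n S.card (σ i) :=
  stmt_9_general n

end
end

section
/- The birational transformations s_1, s_2, s_3 on the field ℂ(a_1,a_2,a_3,x_0,x_1,x_2,x_3) defined by s_1: {x_1 ↔ x_2, a_1 ↔ a_2}, s_2: {x_2 ↔ x_3, a_2 ↔ a_3}, and s_3: {x_0 ↔ x_3, x_1 ↦ x_0(−a_1x_1 + a_3x_3)/(a_3x_1 − a_1x_3), x_2 ↦ x_0(−a_2x_2 + a_3x_3)/(a_3x_2 − a_2x_3), a_1 ↦ −a_1, a_2 ↦ −a_2} satisfy the defining relations of W(B_3): s_1² = s_2² = s_3² = 1, (s_1s_2)³ = 1, (s_1s_3)² = 1, (s_2s_3)⁴ = 1. -/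
/-!
An automorphism of `ℂ(a, x)` fixing `ℂ` is determined by its values on the seven generators, so
each relation is a finite check on generators. `s₁` and `s₂` permute the generators, which settles
`s₁² = s₂² = (s₁s₂)³ = 1`. On each pair `(aᵢ, xᵢ)`, `i = 1, 2`, `s₃` acts by the same Möbius
substitution `x ↦ x₀(−a x + a₃x₃)/(a₃x − a x₃)`, which is involutive once `x₀ ↔ x₃` and `a ↦ −a`;
this gives `s₃² = 1`, and since `s₁` swaps the two pairs, `s₁s₃s₁ = s₃`, i.e. `(s₁s₃)² = 1`.
Finally `(s₂s₃)⁴ = 1` amounts to `s₂` commuting with `s₃s₂s₃`, which is immediate on every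
generator except `x₁`, where it is one rational identity.
-/

noncomputable section

/-- The field `ℂ(a₁,a₂,a₃,x₀,x₁,x₂,x₃)` of rational functions in seven indeterminates. -/
abbrev K10 := FractionRing (MvPolynomial (Fin 7) ℂ)

/-- The seven generators `a₁, a₂, a₃, x₀, x₁, x₂, x₃` of the rational function field. -/
def g10 (i : Fin 7) : K10 :=
  algebraMap (MvPolynomial (Fin 7) ℂ) K10 (MvPolynomial.X i)

open MvPolynomial

theorem mul_sq_eq_one_of_mul_mul_eq {G : Type*} [Monoid G] {a b : G} (hb : b ^ 2 = 1)
    (h : a * b * a = b) : (a * b) ^ 2 = 1 := by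
  rw [sq, ← mul_assoc, h, ← sq, hb]

theorem mul_pow_four_eq_one_of_mul_mul_eq {G : Type*} [Monoid G] {a b : G} (ha : a ^ 2 = 1)
    (hb : b ^ 2 = 1) (h : a * (b * a * b) * a = b * a * b) : (a * b) ^ 4 = 1 := by
  have hw : (b * a * b) ^ 2 = 1 := by
    rw [sq] at ha hb ⊢
    calc b * a * b * (b * a * b) = b * a * (b * b) * a * b := by simp only [mul_assoc]
      _ = 1 := by rw [hb, mul_one, mul_assoc b a a, ha, mul_one, hb]
  calc (a * b) ^ 4 = (a * (b * a * b)) ^ 2 := by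
        rw [show 4 = 2 * 2 from rfl, pow_mul]; simp only [sq, mul_assoc]
    _ = 1 := mul_sq_eq_one_of_mul_mul_eq hw h

theorem moebius_involutive {F R : Type*} [Field F] [FunLike R F F] [RingHomClass R F F] (σ : R)
    {a c x y z : F} (ha : σ a = -a) (hc : σ c = c) (hy : σ y = z) (hz : σ z = y)
    (hx : σ x = y * (-a * x + c * z) / (c * x - a * z))
    (hxz : c * x - a * z ≠ 0) (hac : c ^ 2 - a ^ 2 ≠ 0) (hy0 : y ≠ 0) (hz0 : z ≠ 0) :
    σ (σ x) = x := by
  have hnum : (a * σ x + c * y) * (c * x - a * z) = y * x * (c ^ 2 - a ^ 2) := by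
    rw [hx, add_mul, mul_assoc a, div_mul_cancel₀ _ hxz]; ring
  have hden : (c * σ x + a * y) * (c * x - a * z) = y * z * (c ^ 2 - a ^ 2) := by
    rw [hx, add_mul, mul_assoc c, div_mul_cancel₀ _ hxz]; ring
  have hden0 : c * σ x + a * y ≠ 0 := by
    apply left_ne_zero_of_mul (a := c * σ x + a * y) (b := c * x - a * z)
    rw [hden]; exact mul_ne_zero (mul_ne_zero hy0 hz0) hac
  calc σ (σ x) = z * (a * σ x + c * y) / (c * σ x + a * y) := by
        conv_lhs => rw [hx]
        simp only [map_div₀, map_mul, map_add, map_sub, map_neg, ha, hc, hy, hz]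
        ring
    _ = x := by
        rw [div_eq_iff hden0]
        apply mul_right_cancel₀ hxz
        linear_combination z * hnum - x * hden

/-- The `x₁`-coordinate of `s₂ (s₃ s₂ s₃) s₂ = s₃ s₂ s₃`, where `X₁ = s₃ x₁`, `X₂ = s₃ x₂` and
`Y = s₂ (s₃ x₁)`. -/
theorem conj_x₁_identity {F : Type*} [Field F] {a₁ a₂ a₃ x₀ x₁ x₂ x₃ X₁ X₂ Y : F}
    (hd₁ : a₃ * x₁ - a₁ * x₃ ≠ 0) (hd₂ : a₃ * x₂ - a₂ * x₃ ≠ 0) (hd₃ : a₂ * x₁ - a₁ * x₂ ≠ 0)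
    (hX₁ : X₁ = x₀ * (-a₁ * x₁ + a₃ * x₃) / (a₃ * x₁ - a₁ * x₃))
    (hX₂ : X₂ = x₀ * (-a₂ * x₂ + a₃ * x₃) / (a₃ * x₂ - a₂ * x₃))
    (hY : Y = x₀ * (-a₁ * x₁ + a₂ * x₂) / (a₂ * x₁ - a₁ * x₂))
    (hA : a₁ * X₂ - a₂ * X₁ ≠ 0) (hB : a₁ * X₂ - a₃ * Y ≠ 0) :
    x₂ * (a₁ * Y - a₃ * X₂) / (a₁ * X₂ - a₃ * Y) =
      x₃ * (a₁ * X₁ - a₂ * X₂) / (a₁ * X₂ - a₂ * X₁) := by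
  rw [div_eq_div_iff hB hA]
  subst hX₁ hX₂ hY
  -- `field_simp` only clears denominators it can see are nonzero, so make them atoms first.
  generalize hD₁ : a₃ * x₁ - a₁ * x₃ = D₁ at hd₁ ⊢
  generalize hD₂ : a₃ * x₂ - a₂ * x₃ = D₂ at hd₂ ⊢
  generalize hD₃ : a₂ * x₁ - a₁ * x₂ = D₃ at hd₃ ⊢
  field_simp
  subst hD₁ hD₂ hD₃
  ring

local notation "a₁" => g10 0
local notation "a₂" => g10 1
local notation "a₃" => g10 2
local notation "x₀" => g10 3
local notation "x₁" => g10 4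
local notation "x₂" => g10 5
local notation "x₃" => g10 6

def constFixing : Subgroup (RingAut K10) :=
  fixingSubgroup (RingAut K10)
    (Set.range fun c : ℂ => algebraMap (MvPolynomial (Fin 7) ℂ) K10 (C c))

theorem mem_constFixing_iff {s : RingAut K10} :
    s ∈ constFixing ↔ ∀ c : ℂ, s (algebraMap (MvPolynomial (Fin 7) ℂ) K10 (C c))
      = algebraMap (MvPolynomial (Fin 7) ℂ) K10 (C c) := by
  simp [constFixing, mem_fixingSubgroup_iff, RingAut.smul_def]

theorem constFixing_ext {s t : RingAut K10} (hs : s ∈ constFixing) (ht : t ∈ constFixing)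
    (h : ∀ i, s (g10 i) = t (g10 i)) : s = t := by
  rw [mem_constFixing_iff] at hs ht
  have : (s : K10 →+* K10) = t :=
    IsLocalization.ringHom_ext (nonZeroDivisors _) <| MvPolynomial.ringHom_ext
      (fun c => by simpa using (hs c).trans (ht c).symm) (fun i => by simpa [g10] using h i)
  exact RingEquiv.ext (RingHom.congr_fun this)

theorem g10_ne_zero (i : Fin 7) : g10 i ≠ 0 := by
  simp [g10]

theorem g10_mul_sub_mul_ne_zero {i j k l : Fin 7} (hi : k ≠ i) (hj : k ≠ j) :
    g10 i * g10 j - g10 k * g10 l ≠ 0 := by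
  set p : MvPolynomial (Fin 7) ℂ := X i * X j - X k * X l
  have hp : eval (fun m => if m = k then 0 else 1) p ≠ 0 := by
    simp [p, hi.symm, hj.symm]
  have : g10 i * g10 j - g10 k * g10 l = algebraMap (MvPolynomial (Fin 7) ℂ) K10 p := by
    simp [p, g10]
  rw [this, map_ne_zero_iff _ (IsFractionRing.injective _ _)]
  rintro h0
  simp [h0] at hp

def IsS1 (s : RingAut K10) : Prop :=
  s x₁ = x₂ ∧ s x₂ = x₁ ∧ s a₁ = a₂ ∧ s a₂ = a₁ ∧ s a₃ = a₃ ∧ s x₀ = x₀ ∧ s x₃ = x₃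

def IsS2 (s : RingAut K10) : Prop :=
  s x₂ = x₃ ∧ s x₃ = x₂ ∧ s a₂ = a₃ ∧ s a₃ = a₂ ∧ s a₁ = a₁ ∧ s x₀ = x₀ ∧ s x₁ = x₁

def IsS3 (s : RingAut K10) : Prop :=
  s x₀ = x₃ ∧ s x₃ = x₀ ∧
    s x₁ = x₀ * (-a₁ * x₁ + a₃ * x₃) / (a₃ * x₁ - a₁ * x₃) ∧
    s x₂ = x₀ * (-a₂ * x₂ + a₃ * x₃) / (a₃ * x₂ - a₂ * x₃) ∧
    s a₁ = -a₁ ∧ s a₂ = -a₂ ∧ s a₃ = a₃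

section

variable {s1 s2 s3 : RingAut K10}

theorem IsS1.sq_eq_one (h : IsS1 s1) (hc : s1 ∈ constFixing) : s1 ^ 2 = 1 := by
  obtain ⟨h₁, h₂, h₃, h₄, h₅, h₆, h₇⟩ := h
  refine constFixing_ext (pow_mem hc 2) (one_mem _) fun i => ?_
  fin_cases i <;> simp [sq, RingAut.mul_apply, *]

theorem IsS2.sq_eq_one (h : IsS2 s2) (hc : s2 ∈ constFixing) : s2 ^ 2 = 1 := by
  obtain ⟨h₁, h₂, h₃, h₄, h₅, h₆, h₇⟩ := h
  refine constFixing_ext (pow_mem hc 2) (one_mem _) fun i => ?_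
  fin_cases i <;> simp [sq, RingAut.mul_apply, *]

theorem IsS1.mul_pow_three_eq_one (h1 : IsS1 s1) (h2 : IsS2 s2) (hc1 : s1 ∈ constFixing)
    (hc2 : s2 ∈ constFixing) : (s1 * s2) ^ 3 = 1 := by
  obtain ⟨h₁, h₂, h₃, h₄, h₅, h₆, h₇⟩ := h1
  obtain ⟨h₁', h₂', h₃', h₄', h₅', h₆', h₇'⟩ := h2
  refine constFixing_ext (pow_mem (mul_mem hc1 hc2) 3) (one_mem _) fun i => ?_
  fin_cases i <;> simp [pow_succ, RingAut.mul_apply, *]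

theorem IsS3.apply_apply_x₁ (h : IsS3 s3) : s3 (s3 x₁) = x₁ := by
  obtain ⟨hx₀, hx₃, hx₁, -, ha₁, -, ha₃⟩ := h
  refine moebius_involutive s3 ha₁ ha₃ hx₀ hx₃ hx₁
    (g10_mul_sub_mul_ne_zero (by decide) (by decide)) ?_ (g10_ne_zero 3) (g10_ne_zero 6)
  simpa only [sq] using
    g10_mul_sub_mul_ne_zero (i := 2) (j := 2) (k := 0) (l := 0) (by decide) (by decide)

theorem IsS3.apply_apply_x₂ (h : IsS3 s3) : s3 (s3 x₂) = x₂ := by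
  obtain ⟨hx₀, hx₃, -, hx₂, -, ha₂, ha₃⟩ := h
  refine moebius_involutive s3 ha₂ ha₃ hx₀ hx₃ hx₂
    (g10_mul_sub_mul_ne_zero (by decide) (by decide)) ?_ (g10_ne_zero 3) (g10_ne_zero 6)
  simpa only [sq] using
    g10_mul_sub_mul_ne_zero (i := 2) (j := 2) (k := 1) (l := 1) (by decide) (by decide)

theorem IsS3.sq_eq_one (h : IsS3 s3) (hc : s3 ∈ constFixing) : s3 ^ 2 = 1 := by
  have h₁ := h.apply_apply_x₁
  have h₂ := h.apply_apply_x₂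
  obtain ⟨hx₀, hx₃, -, -, ha₁, ha₂, ha₃⟩ := h
  refine constFixing_ext (pow_mem hc 2) (one_mem _) fun i => ?_
  fin_cases i <;> simp [sq, RingAut.mul_apply, *]

theorem IsS1.conj_eq (h1 : IsS1 s1) (h3 : IsS3 s3) (hc1 : s1 ∈ constFixing)
    (hc3 : s3 ∈ constFixing) : s1 * s3 * s1 = s3 := by
  obtain ⟨h₁, h₂, h₃, h₄, h₅, h₆, h₇⟩ := h1
  obtain ⟨h₁', h₂', h₃', h₄', h₅', h₆', h₇'⟩ := h3
  refine constFixing_ext (mul_mem (mul_mem hc1 hc3) hc1) hc3 fun i => ?_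
  fin_cases i <;> simp [RingAut.mul_apply, *]

theorem IsS2.apply_s3_x₂ (h2 : IsS2 s2) (h3 : IsS3 s3) : s2 (s3 x₂) = s3 x₂ := by
  obtain ⟨h₁, h₂, h₃, h₄, -, h₆, -⟩ := h2
  obtain ⟨-, -, -, hx₂, -⟩ := h3
  rw [hx₂]
  simp only [map_div₀, map_mul, map_add, map_sub, map_neg, h₁, h₂, h₃, h₄, h₆]
  rw [div_eq_div_iff (g10_mul_sub_mul_ne_zero (by decide) (by decide))
    (g10_mul_sub_mul_ne_zero (by decide) (by decide))]
  ring

theorem IsS2.apply_conj_x₁ (h2 : IsS2 s2) (h3 : IsS3 s3) :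
    s2 (s3 (s2 (s3 x₁))) = s3 (s2 (s3 x₁)) := by
  have hX₂ := h2.apply_s3_x₂ h3
  obtain ⟨h₁, h₂, h₃, h₄, h₅, h₆, h₇⟩ := h2
  obtain ⟨h₁', h₂', h₃', h₄', h₅', h₆', h₇'⟩ := h3
  have hY : s2 (s3 x₁) = x₀ * (-a₁ * x₁ + a₂ * x₂) / (a₂ * x₁ - a₁ * x₂) := by
    rw [h₃']
    simp only [map_div₀, map_mul, map_add, map_sub, map_neg, h₂, h₄, h₅, h₆, h₇]
  have hw : s3 (s2 (s3 x₁)) = x₃ * (a₁ * s3 x₁ - a₂ * s3 x₂) / (a₁ * s3 x₂ - a₂ * s3 x₁) := by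
    rw [hY]
    simp only [map_div₀, map_mul, map_add, map_sub, map_neg, h₁', h₅', h₆']
    ring
  have hA : a₁ * s3 x₂ - a₂ * s3 x₁ ≠ 0 := by
    have := (map_ne_zero s3).mpr
      (g10_mul_sub_mul_ne_zero (i := 1) (j := 4) (k := 0) (l := 5) (by decide) (by decide))
    simp only [map_sub, map_mul, h₅', h₆'] at this
    convert this using 1
    ring
  have hB : a₁ * s3 x₂ - a₃ * s2 (s3 x₁) ≠ 0 := by
    simpa only [map_sub, map_mul, h₃, h₅, hX₂] using (map_ne_zero s2).mpr hA
  rw [hw]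
  simp only [map_div₀, map_mul, map_sub, h₂, h₃, h₅, hX₂]
  exact conj_x₁_identity (g10_mul_sub_mul_ne_zero (by decide) (by decide))
    (g10_mul_sub_mul_ne_zero (by decide) (by decide))
    (g10_mul_sub_mul_ne_zero (by decide) (by decide)) h₃' h₄' hY hA hB

theorem IsS2.conj_conj_eq (h2 : IsS2 s2) (h3 : IsS3 s3) (hc2 : s2 ∈ constFixing)
    (hc3 : s3 ∈ constFixing) : s2 * (s3 * s2 * s3) * s2 = s3 * s2 * s3 := by
  have hX₂ := h2.apply_s3_x₂ h3
  have hx₂ := h3.apply_apply_x₂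
  have hx₁ := h2.apply_conj_x₁ h3
  obtain ⟨h₁, h₂, h₃, h₄, h₅, h₆, h₇⟩ := h2
  obtain ⟨h₁', h₂', -, -, h₅', h₆', h₇'⟩ := h3
  have hc : s3 * s2 * s3 ∈ constFixing := mul_mem (mul_mem hc3 hc2) hc3
  refine constFixing_ext (mul_mem (mul_mem hc2 hc) hc2) hc fun i => ?_
  fin_cases i <;> simp [RingAut.mul_apply, *]

end

/-- The birational transformations `s₁, s₂, s₃` on `ℂ(a₁,a₂,a₃,x₀,x₁,x₂,x₃)` defined by
`s₁: {x₁ ↔ x₂, a₁ ↔ a₂}`, `s₂: {x₂ ↔ x₃, a₂ ↔ a₃}`, and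
`s₃: {x₀ ↔ x₃, x₁ ↦ x₀(−a₁x₁ + a₃x₃)/(a₃x₁ − a₁x₃),
x₂ ↦ x₀(−a₂x₂ + a₃x₃)/(a₃x₂ − a₂x₃), a₁ ↦ −a₁, a₂ ↦ −a₂}`
(field automorphisms fixing ℂ, determined by these assignments) satisfy the defining
relations of `W(B₃)`: `s₁² = s₂² = s₃² = 1`, `(s₁s₂)³ = 1`, `(s₁s₃)² = 1`,
`(s₂s₃)⁴ = 1`. -/
theorem stmt_10 (s1 s2 s3 : RingAut K10)
    -- generators: a₁ = g10 0, a₂ = g10 1, a₃ = g10 2, x₀ = g10 3, x₁ = g10 4,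
    -- x₂ = g10 5, x₃ = g10 6
    (hC : ∀ (s : RingAut K10), s = s1 ∨ s = s2 ∨ s = s3 → ∀ c : ℂ,
      s (algebraMap (MvPolynomial (Fin 7) ℂ) K10 (MvPolynomial.C c))
        = algebraMap (MvPolynomial (Fin 7) ℂ) K10 (MvPolynomial.C c))
    (hs1 : s1 (g10 4) = g10 5 ∧ s1 (g10 5) = g10 4 ∧
      s1 (g10 0) = g10 1 ∧ s1 (g10 1) = g10 0 ∧
      s1 (g10 2) = g10 2 ∧ s1 (g10 3) = g10 3 ∧ s1 (g10 6) = g10 6)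
    (hs2 : s2 (g10 5) = g10 6 ∧ s2 (g10 6) = g10 5 ∧
      s2 (g10 1) = g10 2 ∧ s2 (g10 2) = g10 1 ∧
      s2 (g10 0) = g10 0 ∧ s2 (g10 3) = g10 3 ∧ s2 (g10 4) = g10 4)
    (hs3 : s3 (g10 3) = g10 6 ∧ s3 (g10 6) = g10 3 ∧
      s3 (g10 4) = g10 3 * (-(g10 0) * g10 4 + g10 2 * g10 6) /
        (g10 2 * g10 4 - g10 0 * g10 6) ∧
      s3 (g10 5) = g10 3 * (-(g10 1) * g10 5 + g10 2 * g10 6) /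
        (g10 2 * g10 5 - g10 1 * g10 6) ∧
      s3 (g10 0) = -(g10 0) ∧ s3 (g10 1) = -(g10 1) ∧ s3 (g10 2) = g10 2) :
    s1 ^ 2 = 1 ∧ s2 ^ 2 = 1 ∧ s3 ^ 2 = 1 ∧
      (s1 * s2) ^ 3 = 1 ∧ (s1 * s3) ^ 2 = 1 ∧ (s2 * s3) ^ 4 = 1 := by
  have hc : ∀ s, s = s1 ∨ s = s2 ∨ s = s3 → s ∈ constFixing :=
    fun s hs => mem_constFixing_iff.mpr (hC s hs)
  have hc1 := hc s1 (by simp)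
  have hc2 := hc s2 (by simp)
  have hc3 := hc s3 (by simp)
  have hs3sq : s3 ^ 2 = 1 := IsS3.sq_eq_one hs3 hc3
  exact ⟨IsS1.sq_eq_one hs1 hc1, IsS2.sq_eq_one hs2 hc2, hs3sq,
    IsS1.mul_pow_three_eq_one hs1 hs2 hc1 hc2,
    mul_sq_eq_one_of_mul_mul_eq hs3sq (IsS1.conj_eq hs1 hs3 hc1 hc3),
    mul_pow_four_eq_one_of_mul_mul_eq (IsS2.sq_eq_one hs2 hc2) hs3sq
      (IsS2.conj_conj_eq hs2 hs3 hc2 hc3)⟩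

end
end

section
/- On the reduced lattice system, setting f = u_1/u_{12} and g = u_{12}/u_0, the relations u_{112} = u_0(qa_1u_1 + a_3u_{12})/(a_3u_1 + qa_1u_{12}) and u_{11} = (a_2 u_1 u_{12} + qa_1 u_{12} u_{112})/(qa_1 u_1 + a_2 u_{112}) imply the q-Painlevé III system: ḡ = (1 + f t)/(f g (f + t)) and f̄ = (1 + a ḡ t)/(f ḡ (ḡ + a t)), where t = qa_1/a_3, a = a_3/a_2, f̄ = u_{11}/u_{112}, ḡ = u_{112}/u_1. -/
/-!
Both relations are symmetric Möbius maps, homogeneous of degree zero in the pair they act on.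
Dividing numerator and denominator by `a₃u₁₂` (resp. `a₂u₁`) rewrites them as
`u₁₁₂ = u₀ (1 + ft)/(f + t)` and `u₁₁ = u₁₂ (1 + aḡt)/(ḡ + at)`; the system follows from
`fg = u₁/u₀` and `fḡ = u₁₁₂/u₁₂`.
-/

theorem mul_add_mul_div_mul_add_mul_eq_of_ne_zero {K : Type*} [Field K] {p r x y : K}
    (hr : r ≠ 0) (hy : y ≠ 0) :
    (p * x + r * y) / (r * x + p * y) = (1 + x / y * (p / r)) / (x / y + p / r) := by
  field_simp
  ring

theorem stmt_12_general {F : Type*} [Field F]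
    (u0 u1 u12 u112 u11 a1 a2 a3 q : F)
    (hu1 : u1 ≠ 0) (hu12 : u12 ≠ 0)
    (ha2 : a2 ≠ 0) (ha3 : a3 ≠ 0)
    (h112 : u112 = u0 * (q * a1 * u1 + a3 * u12) / (a3 * u1 + q * a1 * u12))
    (h11 : u11 = (a2 * u1 * u12 + q * a1 * u12 * u112) / (q * a1 * u1 + a2 * u112))
    (f g t a fb gb : F)
    (hf : f = u1 / u12) (hg : g = u12 / u0)
    (ht : t = q * a1 / a3) (ha : a = a3 / a2)
    (hfb : fb = u11 / u112) (hgb : gb = u112 / u1) :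
    gb = (1 + f * t) / (f * g * (f + t)) ∧
      fb = (1 + a * gb * t) / (f * gb * (gb + a * t)) := by
  have hu112 : u112 = u0 * ((1 + f * t) / (f + t)) := by
    rw [hf, ht, h112, mul_div_assoc, mul_add_mul_div_mul_add_mul_eq_of_ne_zero ha3 hu12]
  have hu11 : u11 = u12 * ((1 + a * gb * t) / (gb + a * t)) := by
    have hat : a * t = q * a1 / a2 := by rw [ha, ht]; field_simp
    rw [show a * gb * t = gb * (a * t) by ring, hat, hgb,
      ← mul_add_mul_div_mul_add_mul_eq_of_ne_zero ha2 hu1, h11, mul_div_assoc']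
    congr 1 <;> ring
  have hfg : f * g = u1 / u0 := by rw [hf, hg, div_mul_div_cancel₀ hu12]
  have hfgb : f * gb = u112 / u12 := by rw [hf, hgb, mul_comm, div_mul_div_cancel₀ hu1]
  constructor
  · rw [div_mul_eq_div_div_swap, hfg, div_div_eq_mul_div, hgb, hu112]
    ring
  · rw [div_mul_eq_div_div_swap, hfgb, div_div_eq_mul_div, hfb, hu11]
    ring

/-- On the reduced lattice system, setting `f = u₁/u₁₂` and `g = u₁₂/u₀`, the relations
`u₁₁₂ = u₀(qa₁u₁ + a₃u₁₂)/(a₃u₁ + qa₁u₁₂)` and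
`u₁₁ = (a₂u₁u₁₂ + qa₁u₁₂u₁₁₂)/(qa₁u₁ + a₂u₁₁₂)` imply the q-Painlevé III system
`ḡ = (1 + ft)/(fg(f + t))` and `f̄ = (1 + aḡt)/(fḡ(ḡ + at))`, where `t = qa₁/a₃`,
`a = a₃/a₂`, `f̄ = u₁₁/u₁₁₂`, `ḡ = u₁₁₂/u₁`. -/
theorem stmt_12 {F : Type*} [Field F]
    (u0 u1 u12 u112 u11 a1 a2 a3 q : F)
    (hu0 : u0 ≠ 0) (hu1 : u1 ≠ 0) (hu12 : u12 ≠ 0) (hu112 : u112 ≠ 0)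
    (ha1 : a1 ≠ 0) (ha2 : a2 ≠ 0) (ha3 : a3 ≠ 0) (hq : q ≠ 0)
    (hden1 : a3 * u1 + q * a1 * u12 ≠ 0)
    (hden2 : q * a1 * u1 + a2 * u112 ≠ 0)
    (h112 : u112 = u0 * (q * a1 * u1 + a3 * u12) / (a3 * u1 + q * a1 * u12))
    (h11 : u11 = (a2 * u1 * u12 + q * a1 * u12 * u112) / (q * a1 * u1 + a2 * u112))
    (f g t a fb gb : F)
    (hf : f = u1 / u12) (hg : g = u12 / u0)
    (ht : t = q * a1 / a3) (ha : a = a3 / a2)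
    (hfb : fb = u11 / u112) (hgb : gb = u112 / u1) :
    gb = (1 + f * t) / (f * g * (f + t)) ∧
      fb = (1 + a * gb * t) / (f * gb * (gb + a * t)) :=
  stmt_12_general u0 u1 u12 u112 u11 a1 a2 a3 q hu1 hu12 ha2 ha3 h112 h11 f g t a fb gb hf hg ht ha
    hfb hgb
end

section
/- The reflections s_i (for α_0, α_1, α_2) and w_j (for β_0, β_1), defined on Pic(X) by v.s = v − (2(v|γ)/(γ|γ))γ, together with the lattice automorphism σ defined by (H_1,H_2,E_1,…,E_8).σ = (H_2, H_1+H_2−E_3−E_6, E_2, E_7, H_2−E_3, E_5, E_8, H_2−E_6, E_4, E_1), satisfy: σ preserves the intersection form and the anti-canonical class, σ⁶ = 1, s_i σ = σ s_{i+1} (indices mod 3), and w_j σ = σ w_{j+1} (indices mod 2). -/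
noncomputable section

/-- The Picard lattice `Pic(X) = ℤH₁ ⊕ ℤH₂ ⊕ ⊕ᵢℤEᵢ` (with ℚ coefficients), in the
basis `(H₁, H₂, E₁, …, E₈)`. -/
abbrev PicX := Fin 10 → ℚ

/-- Basis vector. -/
def bvec (i : Fin 10) : PicX := fun j => if j = i then 1 else 0

/-- `H₁`. -/
def Hv1 : PicX := bvec 0

/-- `H₂`. -/
def Hv2 : PicX := bvec 1

/-- `E_{k+1}` for `k : Fin 8`. -/
def Ev (k : Fin 8) : PicX := bvec ⟨(k : ℕ) + 2, by omega⟩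

/-- The intersection form: `(Hᵢ|Hⱼ) = 1 − δᵢⱼ`, `(Hᵢ|Eⱼ) = 0`, `(Eᵢ|Eⱼ) = −δᵢⱼ`. -/
def IB (u v : PicX) : ℚ :=
  u 0 * v 1 + u 1 * v 0 - ∑ k : Fin 8,
    u ⟨(k : ℕ) + 2, by omega⟩ * v ⟨(k : ℕ) + 2, by omega⟩

/-- The classes `D₀ = E₆ − E₈`, `D₁ = H₂ − E₁ − E₆`, `D₂ = H₁ − E₂ − E₃`,
`D₃ = E₃ − E₇`, `D₄ = H₂ − E₃ − E₄`, `D₅ = H₁ − E₅ − E₆`. -/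
def Dv : Fin 6 → PicX :=
  ![Ev 5 - Ev 7, Hv2 - Ev 0 - Ev 5, Hv1 - Ev 1 - Ev 2,
    Ev 2 - Ev 6, Hv2 - Ev 2 - Ev 3, Hv1 - Ev 4 - Ev 5]

/-- The simple roots `α₀ = H₁ − E₁ − E₄`, `α₁ = H₂ − E₂ − E₅`,
`α₂ = H₁ + H₂ − E₃ − E₆ − E₇ − E₈`. -/
def av : Fin 3 → PicX :=
  ![Hv1 - Ev 0 - Ev 3, Hv2 - Ev 1 - Ev 4, Hv1 + Hv2 - Ev 2 - Ev 5 - Ev 6 - Ev 7]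

/-- The simple roots `β₀ = H₁ + H₂ − E₂ − E₄ − E₆ − E₈`,
`β₁ = H₁ + H₂ − E₁ − E₃ − E₅ − E₇`. -/
def btv : Fin 2 → PicX :=
  ![Hv1 + Hv2 - Ev 1 - Ev 3 - Ev 5 - Ev 7, Hv1 + Hv2 - Ev 0 - Ev 2 - Ev 4 - Ev 6]

/-- The anti-canonical class `−K_X = 2H₁ + 2H₂ − ΣEᵢ`. -/
def antiK : PicX := (2 : ℚ) • Hv1 + (2 : ℚ) • Hv2 - ∑ k : Fin 8, Ev k


/-- The reflection `v ↦ v − (2(v|γ)/(γ|γ))γ` associated to a class `γ`. -/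
def sRef (γ : PicX) (v : PicX) : PicX := v - (2 * IB v γ / IB γ γ) • γ

/-- The images of the basis `(H₁,H₂,E₁,…,E₈)` under the diagram automorphism `σ`:
`(H₂, H₁+H₂−E₃−E₆, E₂, E₇, H₂−E₃, E₅, E₈, H₂−E₆, E₄, E₁)`. -/
def sigImg : Fin 10 → PicX :=
  ![Hv2, Hv1 + Hv2 - Ev 2 - Ev 5, Ev 1, Ev 6, Hv2 - Ev 2,
    Ev 4, Ev 7, Hv2 - Ev 5, Ev 3, Ev 0]

/-- The lattice automorphism `σ`, extended linearly from its values on the basis. -/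
def sigMap (v : PicX) : PicX := ∑ i : Fin 10, v i • sigImg i

/-!
A linear isometry `f` of the intersection form conjugates the reflection in `γ` into the
reflection in `f γ`. Since `σ` is such an isometry, the relations `sᵢσ = σsᵢ₊₁` and
`wⱼσ = σwⱼ₊₁` reduce to `σ αᵢ = αᵢ₊₁` and `σ βⱼ = βⱼ₊₁`, which are read off from the images
of the basis; isometry and `σ⁶ = 1` are checked on coordinates.
-/

lemma IB_def (u v : PicX) : IB u v = u 0 * v 1 + u 1 * v 0 -
    (u 2 * v 2 + u 3 * v 3 + u 4 * v 4 + u 5 * v 5 + u 6 * v 6 + u 7 * v 7 + u 8 * v 8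
      + u 9 * v 9) := by
  simp only [IB, Fin.sum_univ_eight]
  rfl

lemma map_sRef_of_isometry (f : PicX →ₗ[ℚ] PicX) (hf : ∀ u v, IB (f u) (f v) = IB u v)
    (γ v : PicX) : f (sRef γ v) = sRef (f γ) (f v) := by
  simp only [sRef, map_sub, map_smul, hf]

def sigMapₗ : PicX →ₗ[ℚ] PicX := Fintype.linearCombination ℚ sigImg

lemma coe_sigMapₗ : ⇑sigMapₗ = sigMap :=
  funext fun v => Fintype.linearCombination_apply ℚ sigImg v

lemma sigMapₗ_bvec (i : Fin 10) : sigMapₗ (bvec i) = sigImg i := by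
  have : bvec i = Pi.single i 1 := funext fun j => (Pi.single_apply i 1 j).symm
  rw [sigMapₗ, this, Fintype.linearCombination_apply_single, one_smul]

lemma sigMapₗ_Hv1 : sigMapₗ Hv1 = Hv2 := sigMapₗ_bvec 0

lemma sigMapₗ_Hv2 : sigMapₗ Hv2 = Hv1 + Hv2 - Ev 2 - Ev 5 := sigMapₗ_bvec 1

lemma sigMapₗ_Ev (k : Fin 8) :
    sigMapₗ (Ev k) = ![Ev 1, Ev 6, Hv2 - Ev 2, Ev 4, Ev 7, Hv2 - Ev 5, Ev 3, Ev 0] k := by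
  rw [Ev, sigMapₗ_bvec]
  fin_cases k <;> rfl

lemma sigMap_av (i : Fin 3) : sigMap (av i) = av (i + 1) := by
  rw [← coe_sigMapₗ]
  fin_cases i <;> simp only [av, map_sub, map_add, sigMapₗ_Hv1, sigMapₗ_Hv2, sigMapₗ_Ev,
    Fin.isValue, Fin.zero_eta, Fin.mk_one, Fin.reduceFinMk, Matrix.cons_val_zero,
    Matrix.cons_val_one, Matrix.cons_val, Fin.reduceAdd]
  abel

lemma sigMap_btv (j : Fin 2) : sigMap (btv j) = btv (j + 1) := by
  rw [← coe_sigMapₗ]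
  fin_cases j <;> simp only [btv, map_sub, map_add, sigMapₗ_Hv1, sigMapₗ_Hv2, sigMapₗ_Ev,
    Fin.isValue, Fin.zero_eta, Fin.mk_one, Matrix.cons_val_zero, Matrix.cons_val_one,
    Matrix.cons_val, Fin.reduceAdd] <;> abel

lemma sigMap_antiK : sigMap antiK = antiK := by
  rw [← coe_sigMapₗ]
  simp only [antiK, Fin.sum_univ_eight, map_sub, map_add, map_smul, sigMapₗ_Hv1, sigMapₗ_Hv2,
    sigMapₗ_Ev, Fin.isValue, Matrix.cons_val_zero, Matrix.cons_val_one, Matrix.cons_val]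
  module

lemma sigMap_apply (v : PicX) : sigMap v =
    ![v 1, v 0 + v 1 + v 4 + v 7, v 9, v 2, -v 1 - v 4, v 8, v 5, -v 1 - v 7, v 3, v 6] := by
  funext i
  fin_cases i <;> simp [sigMap, Fin.sum_univ_succ, sigImg, Hv1, Hv2, Ev, bvec] <;> ring

lemma IB_sigMap (u v : PicX) : IB (sigMap u) (sigMap v) = IB u v := by
  simp only [IB_def, sigMap_apply, Fin.isValue, Matrix.cons_val_zero, Matrix.cons_val_one,
    Matrix.cons_val]
  ring

lemma sigMap_sRef (γ v : PicX) : sigMap (sRef γ v) = sRef (sigMap γ) (sigMap v) := by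
  simpa only [coe_sigMapₗ] using
    map_sRef_of_isometry sigMapₗ (by simpa only [coe_sigMapₗ] using IB_sigMap) γ v

lemma sigMap_iterate_six : sigMap^[6] = id := by
  funext v
  simp only [Function.iterate_succ_apply', Function.iterate_zero_apply, sigMap_apply]
  funext i
  fin_cases i <;> simp only [Fin.isValue, Fin.zero_eta, Fin.mk_one, Fin.reduceFinMk,
    Matrix.cons_val_zero, Matrix.cons_val_one, Matrix.cons_val, id_eq] <;> ring

/-- The reflections `sᵢ` (for `α₀,α₁,α₂`) and `wⱼ` (for `β₀,β₁`), together with the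
lattice automorphism `σ`, satisfy: `σ` preserves the intersection form and the
anti-canonical class, `σ⁶ = 1`, `sᵢσ = σs_{i+1}` (indices mod 3), and
`wⱼσ = σw_{j+1}` (indices mod 2), as right actions on `Pic(X)`. -/
theorem stmt_16 :
    (∀ u v : PicX, IB (sigMap u) (sigMap v) = IB u v) ∧
    sigMap antiK = antiK ∧
    sigMap^[6] = id ∧
    (∀ (i : Fin 3) (v : PicX), sigMap (sRef (av i) v) = sRef (av (i + 1)) (sigMap v)) ∧
    (∀ (j : Fin 2) (v : PicX), sigMap (sRef (btv j) v) = sRef (btv (j + 1)) (sigMap v)) :=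
  ⟨IB_sigMap, sigMap_antiK, sigMap_iterate_six,
    fun i v => by rw [sigMap_sRef, sigMap_av], fun j v => by rw [sigMap_sRef, sigMap_btv]⟩

end
end
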